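/- Fix integers t ≥ 2 and K ≥ 1, and reals Δ > 0 and τ² ≥ 0. Let ν : {1, …, K} → ℝ satisfy |ν(r') − ν(r)| ≥ Δ for all r ≠ r'. On a probability space, let (c_j)_{j=1}^{t−1} be i.i.d. random variables uniformly distributed on {1, …, K}, and let (g_j)_{j=1}^{t−1} be i.i.d. real Gaussian random variables with mean 0 and variance τ², with the family (g_j) independent of the family (c_j). Define logits s_j := ν(c_j) + g_j for j = 1, …, t−1, and attention weights α_j := e^{s_j} / Σ_{ℓ=1}^{t−1} e^{s_ℓ}. Suppose there exist η ∈ (0, 1), B ≤ 2, and κ' > 0 such that for every j with 1 ≤ j ≤ t−2, writing S_j := s_{j+1} − s_j, m_j := α_j + α_{j+1}, and E_j := {m_j ≥ η} ∩ {|S_j| ≤ B}, one has E[S_j² · 1_{E_j}] ≥ κ' · E[S_j²]. Then the expected attention roughness R_t := Σ_{j=1}^{t−2} (α_{j+1} − α_j)² satisfies E[R_t] ≥ (η² κ' / 16) · (t − 2) · (1 − 1/K) · Δ². -/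

import Mathlib

open MeasureTheory ProbabilityTheory NNReal

/-- The index `j` of an adjacent pair, viewed in `Fin (t - 1)`. -/
def pairLeft {t : ℕ} (j : Fin (t - 2)) : Fin (t - 1) :=
  ⟨j.val, by have := j.isLt; omega⟩

/-- The index `j + 1` of an adjacent pair, viewed in `Fin (t - 1)`. -/
def pairRight {t : ℕ} (j : Fin (t - 2)) : Fin (t - 1) :=
  ⟨j.val + 1, by have := j.isLt; omega⟩

/-!
Fix an adjacent pair and write `S = s_{j+1} - s_j`. On the event `E_j` the two attention weights
carry mass at least `η`, and `|S| ≤ 2`; since `(e^S - 1) / (e^S + 1) = tanh (S / 2)` and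
`|tanh (x / 2)| ≥ |x| / 4` for `|x| ≤ 2`, there `(α_{j+1} - α_j)² ≥ η² S² / 16`. The
non-degeneracy hypothesis turns this into `E[(α_{j+1} - α_j)²] ≥ η² κ' E[S²] / 16`.
Finally `S = (ν(c_{j+1}) - ν(c_j)) + (g_{j+1} - g_j)` with the noise part centred and independent
of the label part, so `E[S²] ≥ E[(ν(c_{j+1}) - ν(c_j))²] ≥ Δ² P(c_j ≠ c_{j+1}) = (1 - 1/K) Δ²`.
-/

open scoped ENNReal
open Real

lemma sub_mul_exp_add_exp_le {a b : ℝ} (hab : a ≤ b) (h2 : b - a ≤ 2) :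
    (b - a) * (exp a + exp b) ≤ 4 * (exp b - exp a) := by
  set x := b - a with hx
  set u := exp (x / 2)
  have hu : 1 + x / 2 ≤ u := by linarith [add_one_le_exp (x / 2)]
  have hb : exp b = exp a * u ^ 2 := by
    rw [sq, ← exp_add, ← exp_add, hx]; ring_nf
  have hu2 : (1 + x / 2) ^ 2 * (4 - x) ≤ u ^ 2 * (4 - x) := by gcongr; linarith
  have key : x * (1 + u ^ 2) ≤ 4 * (u ^ 2 - 1) := by
    nlinarith [mul_nonneg (sub_nonneg.2 hab) (by nlinarith : (0 : ℝ) ≤ 8 - x ^ 2)]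
  rw [hb]
  nlinarith [exp_pos a]

lemma sq_sub_mul_sq_exp_add_exp_le {a b : ℝ} (hab : |b - a| ≤ 2) :
    (b - a) ^ 2 * (exp a + exp b) ^ 2 ≤ 16 * (exp b - exp a) ^ 2 := by
  rcases le_total a b with h | h
  · have := sub_mul_exp_add_exp_le h (le_of_abs_le hab)
    calc (b - a) ^ 2 * (exp a + exp b) ^ 2 = ((b - a) * (exp a + exp b)) ^ 2 := by ring
      _ ≤ (4 * (exp b - exp a)) ^ 2 :=
          pow_le_pow_left₀ (mul_nonneg (by linarith) (by positivity)) this 2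
      _ = 16 * (exp b - exp a) ^ 2 := by ring
  · have := sub_mul_exp_add_exp_le h (by linarith [neg_le_of_abs_le hab])
    calc (b - a) ^ 2 * (exp a + exp b) ^ 2 = ((a - b) * (exp b + exp a)) ^ 2 := by ring
      _ ≤ (4 * (exp a - exp b)) ^ 2 :=
          pow_le_pow_left₀ (mul_nonneg (by linarith) (by positivity)) this 2
      _ = 16 * (exp b - exp a) ^ 2 := by ring

lemma sq_mul_sq_sub_le_sq_div_sub_div {a b Z η : ℝ} (hZ : 0 < Z) (hη : 0 ≤ η)
    (hηab : η ≤ exp a / Z + exp b / Z) (hab : |b - a| ≤ 2) :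
    η ^ 2 / 16 * (b - a) ^ 2 ≤ (exp b / Z - exp a / Z) ^ 2 := by
  rw [← add_div] at hηab
  calc η ^ 2 / 16 * (b - a) ^ 2 ≤ ((exp a + exp b) / Z) ^ 2 / 16 * (b - a) ^ 2 := by gcongr
    _ = (b - a) ^ 2 * (exp a + exp b) ^ 2 / (16 * Z ^ 2) := by ring
    _ ≤ 16 * (exp b - exp a) ^ 2 / (16 * Z ^ 2) := by
        gcongr ?_ / _; exact sq_sub_mul_sq_exp_add_exp_le hab
    _ = (exp b / Z - exp a / Z) ^ 2 := by field_simp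

section

variable {Ω : Type*} [MeasurableSpace Ω] {μ : Measure Ω}

lemma ProbabilityTheory.IndepFun.integral_sq_le_integral_add_sq [IsFiniteMeasure μ]
    {X Y : Ω → ℝ} (hXY : IndepFun X Y μ) (hX : MemLp X 2 μ) (hY : MemLp Y 2 μ)
    (hY0 : ∫ ω, Y ω ∂μ = 0) :
    ∫ ω, X ω ^ 2 ∂μ ≤ ∫ ω, (X ω + Y ω) ^ 2 ∂μ := by
  have hcross : ∫ ω, 2 * (X ω * Y ω) ∂μ = 0 := by
    rw [integral_const_mul, hXY.integral_fun_mul_eq_mul_integral hX.1 hY.1, hY0]; simp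
  have hXYint : Integrable (fun ω => 2 * (X ω * Y ω)) μ := (hX.integrable_mul hY).const_mul 2
  calc ∫ ω, X ω ^ 2 ∂μ ≤ ∫ ω, X ω ^ 2 ∂μ + ∫ ω, Y ω ^ 2 ∂μ :=
        le_add_of_nonneg_right (integral_nonneg fun _ => sq_nonneg _)
    _ = ∫ ω, (X ω + Y ω) ^ 2 ∂μ := by
        simp_rw [add_sq', mul_assoc]
        rw [integral_add (f := fun ω => X ω ^ 2 + Y ω ^ 2)
          (hX.integrable_sq.add hY.integrable_sq) hXYint,
          integral_add hX.integrable_sq hY.integrable_sq, hcross, add_zero]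

lemma ProbabilityTheory.IndepFun.measure_setOf_eq_of_uniform [IsProbabilityMeasure μ]
    {α : Type*} [Countable α] [MeasurableSpace α] [MeasurableSingletonClass α] {X Y : Ω → α}
    (hXY : IndepFun X Y μ) (hX : Measurable X) (hY : Measurable Y) {p : ℝ≥0∞} (hXp : ∀ a, μ (X ⁻¹' {a}) = p) :
    μ {ω | X ω = Y ω} = p := by
  have hunion : {ω | X ω = Y ω} = ⋃ a, X ⁻¹' {a} ∩ Y ⁻¹' {a} := by
    ext ω; simp [eq_comm]
  have hdisj : Pairwise (Function.onFun Disjoint fun a => X ⁻¹' {a} ∩ Y ⁻¹' {a}) :=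
    fun a b hab => Set.disjoint_left.2 fun ω ha hb => hab (ha.1.symm.trans hb.1)
  rw [hunion, measure_iUnion hdisj fun a => (hX (.singleton a)).inter (hY (.singleton a))]
  simp_rw [hXY.measure_inter_preimage_eq_mul _ _ (.singleton _) (.singleton _), hXp]
  rw [ENNReal.tsum_mul_left, ← measure_iUnion (pairwise_disjoint_fiber Y)
    fun a => hY (.singleton a), ← Set.preimage_iUnion, Set.iUnion_of_singleton, Set.preimage_univ,
    measure_univ, mul_one]

lemma mul_measureReal_ne_le_integral_sq_sub [IsFiniteMeasure μ] {α : Type*} {X Y : Ω → α}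
    {ν : α → ℝ} {Δ : ℝ} (hΔ : 0 ≤ Δ) (hsep : ∀ a b, a ≠ b → Δ ≤ |ν b - ν a|)
    (hint : Integrable (fun ω => (ν (Y ω) - ν (X ω)) ^ 2) μ) :
    Δ ^ 2 * μ.real {ω | X ω ≠ Y ω} ≤ ∫ ω, (ν (Y ω) - ν (X ω)) ^ 2 ∂μ := by
  calc Δ ^ 2 * μ.real {ω | X ω ≠ Y ω}
      ≤ Δ ^ 2 * μ.real {ω | Δ ^ 2 ≤ (ν (Y ω) - ν (X ω)) ^ 2} := by
        refine mul_le_mul_of_nonneg_left (measureReal_mono fun ω hω => ?_) (sq_nonneg Δ)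
        exact show Δ ^ 2 ≤ _ from sq_le_sq.2 ((abs_of_nonneg hΔ).trans_le (hsep _ _ hω))
    _ ≤ ∫ ω, (ν (Y ω) - ν (X ω)) ^ 2 ∂μ :=
        mul_meas_ge_le_integral_of_nonneg (ae_of_all _ fun _ => sq_nonneg _) hint _

lemma le_integral_sq_logit_sub [IsProbabilityMeasure μ] {ι : Type*} {K : ℕ} {Δ : ℝ}
    (hΔ : 0 ≤ Δ) {τsq : ℝ≥0} {ν : Fin K → ℝ} (hsep : ∀ r r' : Fin K, r ≠ r' → Δ ≤ |ν r' - ν r|)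
    {c : ι → Ω → Fin K} {g : ι → Ω → ℝ}
    (hc_meas : ∀ j, Measurable (c j)) (hg_meas : ∀ j, Measurable (g j))
    (hc_indep : iIndepFun c μ) (hc_unif : ∀ j (r : Fin K), μ (c j ⁻¹' {r}) = 1 / K)
    (hg_gauss : ∀ j, μ.map (g j) = gaussianReal 0 τsq)
    (hcg_indep : IndepFun (fun ω j => c j ω) (fun ω j => g j ω) μ)
    {s : ι → Ω → ℝ} (hs : ∀ j ω, s j ω = ν (c j ω) + g j ω) {i k : ι} (hik : i ≠ k) :
    (1 - 1 / (K : ℝ)) * Δ ^ 2 ≤ ∫ ω, (s k ω - s i ω) ^ 2 ∂μ := by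
  have hg_law (j : ι) : HasLaw (g j) (gaussianReal 0 τsq) μ :=
    ⟨(hg_meas j).aemeasurable, hg_gauss j⟩
  have hg_L2 (j : ι) : MemLp (g j) 2 μ :=
    (memLp_map_measure_iff aestronglyMeasurable_id (hg_meas j).aemeasurable).1
      (hg_gauss j ▸ memLp_id_gaussianReal 2)
  have hg_mean (j : ι) : ∫ ω, g j ω ∂μ = 0 := (hg_law j).integral_eq.trans integral_id_gaussianReal
  set D : Ω → ℝ := fun ω => ν (c k ω) - ν (c i ω)
  set G : Ω → ℝ := fun ω => g k ω - g i ω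
  obtain ⟨M, hM⟩ : ∃ M, ∀ r, |ν r| ≤ M :=
    ⟨∑ r, |ν r|, fun r => Finset.single_le_sum (fun r _ => abs_nonneg (ν r)) (Finset.mem_univ r)⟩
  have hD : MemLp D 2 μ := by
    refine .of_bound (by fun_prop) (M + M) (ae_of_all _ fun ω => ?_)
    exact (abs_sub _ _).trans (add_le_add (hM _) (hM _))
  have hDG : IndepFun D G μ := hcg_indep.comp (φ := fun v : ι → Fin K => ν (v k) - ν (v i))
    (ψ := fun w : ι → ℝ => w k - w i) (by fun_prop) (by fun_prop)
  have hcollision : μ.real {ω | c i ω ≠ c k ω} = 1 - 1 / K := by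
    have hμ := (hc_indep.indepFun hik).measure_setOf_eq_of_uniform (hc_meas i) (hc_meas k)
      (hc_unif i)
    rw [← Set.compl_ofPred,
      probReal_compl_eq_one_sub (measurableSet_eq_fun (hc_meas i) (hc_meas k)), measureReal_def,
      hμ, ENNReal.toReal_div]
    simp
  have hG_mean : ∫ ω, G ω ∂μ = 0 := by
    rw [integral_sub ((hg_L2 k).integrable one_le_two) ((hg_L2 i).integrable one_le_two),
      hg_mean, hg_mean, sub_self]
  calc (1 - 1 / (K : ℝ)) * Δ ^ 2 = Δ ^ 2 * μ.real {ω | c i ω ≠ c k ω} := by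
        rw [hcollision]; ring
    _ ≤ ∫ ω, D ω ^ 2 ∂μ := mul_measureReal_ne_le_integral_sq_sub hΔ hsep hD.integrable_sq
    _ ≤ ∫ ω, (D ω + G ω) ^ 2 ∂μ :=
        hDG.integral_sq_le_integral_add_sq hD ((hg_L2 k).sub (hg_L2 i)) hG_mean
    _ = ∫ ω, (s k ω - s i ω) ^ 2 ∂μ := by congr 1 with ω; simp only [D, G, hs]; ring

lemma softmax_mem_Icc {ι : Type*} [Fintype ι] (x : ι → ℝ) (k : ι) :
    exp (x k) / ∑ ℓ, exp (x ℓ) ∈ Set.Icc 0 1 :=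
  ⟨by positivity, div_le_one_of_le₀ (Finset.single_le_sum (fun ℓ _ => (exp_pos (x ℓ)).le)
    (Finset.mem_univ k)) (by positivity)⟩

lemma integrable_sq_softmax_sub [IsFiniteMeasure μ] {ι : Type*} [Fintype ι]
    {s α : ι → Ω → ℝ} (hs_meas : ∀ j, Measurable (s j))
    (hα : ∀ j ω, α j ω = exp (s j ω) / ∑ ℓ, exp (s ℓ ω)) (i k : ι) :
    Integrable (fun ω => (α k ω - α i ω) ^ 2) μ := by
  have hα_meas (j : ι) : Measurable (α j) := by rw [show α j = _ from funext (hα j)]; fun_prop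
  refine .of_bound (by fun_prop) 1 (ae_of_all _ fun ω => ?_)
  rw [norm_pow, Real.norm_eq_abs, ← Real.dist_eq, hα, hα]
  exact pow_le_one₀ dist_nonneg
    (Real.dist_le_of_mem_Icc_01 (softmax_mem_Icc (s · ω) k) (softmax_mem_Icc (s · ω) i))

lemma le_integral_sq_softmax_sub [IsFiniteMeasure μ] {ι : Type*} [Fintype ι]
    {s α : ι → Ω → ℝ} (hs_meas : ∀ j, Measurable (s j))
    (hα : ∀ j ω, α j ω = exp (s j ω) / ∑ ℓ, exp (s ℓ ω)) {η B κ' : ℝ} (hη : 0 ≤ η)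
    (hB : B ≤ 2) {i k : ι}
    (hnd : κ' * ∫ ω, (s k ω - s i ω) ^ 2 ∂μ ≤
      ∫ ω in {ω | η ≤ α i ω + α k ω} ∩ {ω | |s k ω - s i ω| ≤ B}, (s k ω - s i ω) ^ 2 ∂μ) :
    η ^ 2 * κ' / 16 * ∫ ω, (s k ω - s i ω) ^ 2 ∂μ ≤ ∫ ω, (α k ω - α i ω) ^ 2 ∂μ := by
  have hZ (ω : Ω) : 0 < ∑ ℓ, exp (s ℓ ω) :=
    Finset.sum_pos (fun _ _ => exp_pos _) ⟨i, Finset.mem_univ i⟩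
  have hα_meas (j : ι) : Measurable (α j) := by rw [show α j = _ from funext (hα j)]; fun_prop
  have hint := integrable_sq_softmax_sub (μ := μ) hs_meas hα i k
  set E := {ω | η ≤ α i ω + α k ω} ∩ {ω | |s k ω - s i ω| ≤ B}
  have hE : MeasurableSet E := by measurability
  have hpt : ∀ ω ∈ E, η ^ 2 / 16 * (s k ω - s i ω) ^ 2 ≤ (α k ω - α i ω) ^ 2 := by
    rintro ω ⟨hηω : η ≤ α i ω + α k ω, hBω : |s k ω - s i ω| ≤ B⟩
    rw [hα, hα] at hηω ⊢
    exact sq_mul_sq_sub_le_sq_div_sub_div (hZ ω) hη hηω (hBω.trans hB)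
  calc η ^ 2 * κ' / 16 * ∫ ω, (s k ω - s i ω) ^ 2 ∂μ
      = η ^ 2 / 16 * (κ' * ∫ ω, (s k ω - s i ω) ^ 2 ∂μ) := by ring
    _ ≤ η ^ 2 / 16 * ∫ ω in E, (s k ω - s i ω) ^ 2 ∂μ := by gcongr
    _ = ∫ ω in E, η ^ 2 / 16 * (s k ω - s i ω) ^ 2 ∂μ := (integral_const_mul _ _).symm
    _ ≤ ∫ ω in E, (α k ω - α i ω) ^ 2 ∂μ :=
        integral_mono_of_nonneg (ae_of_all _ fun _ => by positivity) hint.integrableOn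
          (ae_restrict_of_forall_mem hE hpt)
    _ ≤ ∫ ω, (α k ω - α i ω) ^ 2 ∂μ :=
        setIntegral_le_integral hint (ae_of_all _ fun _ => sq_nonneg _)

end

theorem attention_roughness_lower_bound_general {Ω : Type*} [MeasurableSpace Ω] (μ : Measure Ω)
    [IsProbabilityMeasure μ] (t K : ℕ)
    (Δ : ℝ) (hΔ : 0 < Δ) (τsq : ℝ≥0)
    (ν : Fin K → ℝ) (hsep : ∀ r r' : Fin K, r ≠ r' → Δ ≤ |ν r' - ν r|)
    (c : Fin (t - 1) → Ω → Fin K) (g : Fin (t - 1) → Ω → ℝ)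
    (hc_meas : ∀ j, Measurable (c j)) (hg_meas : ∀ j, Measurable (g j))
    (hc_indep : iIndepFun c μ)
    (hc_unif : ∀ j (r : Fin K), μ (c j ⁻¹' {r}) = 1 / K)
    (hg_gauss : ∀ j, μ.map (g j) = gaussianReal 0 τsq)
    (hcg_indep : IndepFun (fun ω j => c j ω) (fun ω j => g j ω) μ)
    (s : Fin (t - 1) → Ω → ℝ) (hs : ∀ j ω, s j ω = ν (c j ω) + g j ω)
    (α : Fin (t - 1) → Ω → ℝ)
    (hα : ∀ j ω, α j ω = Real.exp (s j ω) / ∑ ℓ, Real.exp (s ℓ ω))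
    (η B κ' : ℝ) (hη : η ∈ Set.Ioo (0 : ℝ) 1) (hB : B ≤ 2) (hκ : 0 < κ')
    (hnd : ∀ j : Fin (t - 2),
      κ' * ∫ ω, (s (pairRight j) ω - s (pairLeft j) ω) ^ 2 ∂μ ≤
        ∫ ω in {ω | η ≤ α (pairLeft j) ω + α (pairRight j) ω} ∩
            {ω | |s (pairRight j) ω - s (pairLeft j) ω| ≤ B},
          (s (pairRight j) ω - s (pairLeft j) ω) ^ 2 ∂μ) :
    η ^ 2 * κ' / 16 * ((t - 2 : ℕ) * (1 - 1 / (K : ℝ)) * Δ ^ 2) ≤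
      ∫ ω, ∑ j : Fin (t - 2), (α (pairRight j) ω - α (pairLeft j) ω) ^ 2 ∂μ := by
  have hs_meas (j : Fin (t - 1)) : Measurable (s j) := by
    rw [show s j = _ from funext (hs j)]
    exact ((measurable_of_countable ν).comp (hc_meas j)).add (hg_meas j)
  have hpair (j : Fin (t - 2)) : η ^ 2 * κ' / 16 * ((1 - 1 / (K : ℝ)) * Δ ^ 2) ≤
      ∫ ω, (α (pairRight j) ω - α (pairLeft j) ω) ^ 2 ∂μ := by
    have hLR : pairLeft j ≠ pairRight j := by simp [pairLeft, pairRight, Fin.ext_iff]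
    refine (mul_le_mul_of_nonneg_left ?_ (by have := hη.1; positivity)).trans
      (le_integral_sq_softmax_sub hs_meas hα hη.1.le hB (hnd j))
    exact le_integral_sq_logit_sub hΔ.le hsep hc_meas hg_meas hc_indep hc_unif hg_gauss hcg_indep hs
      hLR
  rw [integral_finsetSum _ fun j _ => integrable_sq_softmax_sub hs_meas hα _ _]
  calc η ^ 2 * κ' / 16 * ((t - 2 : ℕ) * (1 - 1 / (K : ℝ)) * Δ ^ 2)
      = ∑ _j : Fin (t - 2), η ^ 2 * κ' / 16 * ((1 - 1 / (K : ℝ)) * Δ ^ 2) := by simp; ring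
    _ ≤ _ := Finset.sum_le_sum fun j _ => hpair j

/-- Main theorem (projected formulation): a monotone increasing-in-`K` lower bound on the
expected attention roughness `E[R_t] = E[∑_{j=1}^{t-2} (α_{j+1} - α_j)²]` for softmax
attention over logits `s_j = ν(c_j) + g_j`, where the topic labels `c_j` are i.i.d. uniform
on `{1, …, K}`, the noises `g_j` are i.i.d. centered Gaussians with variance `τ²`
independent of the labels, `ν` has `Δ`-separated values, and the softmax non-degeneracy
condition holds for each adjacent pair:
`E[R_t] ≥ (η² κ' / 16) · (t - 2) · (1 - 1/K) · Δ²`. -/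
theorem attention_roughness_lower_bound {Ω : Type*} [MeasurableSpace Ω] (μ : Measure Ω)
    [IsProbabilityMeasure μ] (t K : ℕ) (ht : 2 ≤ t) (hK : 1 ≤ K)
    (Δ : ℝ) (hΔ : 0 < Δ) (τsq : ℝ≥0)
    (ν : Fin K → ℝ) (hsep : ∀ r r' : Fin K, r ≠ r' → Δ ≤ |ν r' - ν r|)
    (c : Fin (t - 1) → Ω → Fin K) (g : Fin (t - 1) → Ω → ℝ)
    (hc_meas : ∀ j, Measurable (c j)) (hg_meas : ∀ j, Measurable (g j))
    (hc_indep : iIndepFun c μ)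
    (hc_unif : ∀ j (r : Fin K), μ (c j ⁻¹' {r}) = 1 / K)
    (hg_indep : iIndepFun g μ)
    (hg_gauss : ∀ j, μ.map (g j) = gaussianReal 0 τsq)
    (hcg_indep : IndepFun (fun ω j => c j ω) (fun ω j => g j ω) μ)
    (s : Fin (t - 1) → Ω → ℝ) (hs : ∀ j ω, s j ω = ν (c j ω) + g j ω)
    (α : Fin (t - 1) → Ω → ℝ)
    (hα : ∀ j ω, α j ω = Real.exp (s j ω) / ∑ ℓ, Real.exp (s ℓ ω))
    (η B κ' : ℝ) (hη : η ∈ Set.Ioo (0 : ℝ) 1) (hB : B ≤ 2) (hκ : 0 < κ')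
    (hnd : ∀ j : Fin (t - 2),
      κ' * ∫ ω, (s (pairRight j) ω - s (pairLeft j) ω) ^ 2 ∂μ ≤
        ∫ ω in {ω | η ≤ α (pairLeft j) ω + α (pairRight j) ω} ∩
            {ω | |s (pairRight j) ω - s (pairLeft j) ω| ≤ B},
          (s (pairRight j) ω - s (pairLeft j) ω) ^ 2 ∂μ) :
    η ^ 2 * κ' / 16 * ((t - 2 : ℕ) * (1 - 1 / (K : ℝ)) * Δ ^ 2) ≤
      ∫ ω, ∑ j : Fin (t - 2), (α (pairRight j) ω - α (pairLeft j) ω) ^ 2 ∂μ :=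
  attention_roughness_lower_bound_general μ t K Δ hΔ τsq ν hsep c g hc_meas hg_meas hc_indep hc_unif
    hg_gauss hcg_indep s hs α hα η B κ' hη hB hκ hnd
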